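/- In the relaxed (pruning-scan) game, solvability does not depend on which match is chosen as the first pair of a group: if the board is relaxed-solvable by some sequence, then for any group g and any choice of two currently playable tiles of g as g's first pair at the moment g is first played, a completing relaxed solution still exists ('it is impossible to play the wrong match' in the scan). -/

import Mathlib

/-- A board is a finite multiset of isolated stacks; each stack is a list of
tile groups, with the head of the list being the top tile of the stack. -/
abbrev Board (G : Type*) := Multiset (List G)

variable {G : Type*} [DecidableEq G]

/-- The number of tiles of group `g` remaining on the board. -/
def tileCount (B : Board G) (g : G) : ℕ := (B.map (fun s => s.count g)).sum

/-- The total number of tiles on the board. -/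
def totalTiles (B : Board G) : ℕ := (B.map List.length).sum

/-- The board obtained by removing the (playable) top tiles of stacks `s₁` and
`s₂`, the remaining stacks being `rest`; emptied stacks disappear. -/
def play (s₁ s₂ : List G) (rest : Board G) : Board G :=
  Multiset.filter (fun s => s ≠ []) (s₁.tail ::ₘ s₂.tail ::ₘ rest)

/-- A legal move: remove two playable (top) tiles of the same group. -/
def Move (B B' : Board G) : Prop :=
  ∃ (g : G) (s₁ s₂ : List G) (rest : Board G),
    B = s₁ ::ₘ s₂ ::ₘ rest ∧ s₁.head? = some g ∧ s₂.head? = some g ∧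
    B' = play s₁ s₂ rest

/-- A board is solvable iff some sequence of legal moves empties it. -/
def Solvable (B : Board G) : Prop := Relation.ReflTransGen Move B 0

/-- All stacks are nonempty and of height at most two. -/
def HeightsOK (B : Board G) : Prop := ∀ s ∈ B, s ≠ [] ∧ s.length ≤ 2

/-- A blocked cycle: distinct groups `p 0, …, p k`, each with exactly two
remaining tiles, such that for each `i` there is a height-two stack with a
`p (i+1)`-tile (cyclically) on top of a `p i`-tile. -/
def BlockedCycle (B : Board G) {k : ℕ} (p : Fin (k + 1) → G) : Prop :=
  Function.Injective p ∧ (∀ i, tileCount B (p i) = 2) ∧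
    ∀ i, [p (i + 1), p i] ∈ B

/-- The board contains some blocked cycle. -/
def HasBlockedCycle (B : Board G) : Prop :=
  ∃ (k : ℕ) (p : Fin (k + 1) → G), BlockedCycle B p

/-- A relaxed (pruning-scan) move relative to the initial board `B₀`: either
remove a playable pair of a group no tile of which has been removed yet, or
remove a single playable tile of a group from which at least two tiles have
already been removed. -/
def RMove (B₀ : Board G) (C C' : Board G) : Prop :=
  (∃ (g : G) (s₁ s₂ : List G) (rest : Board G),
      C = s₁ ::ₘ s₂ ::ₘ rest ∧ s₁.head? = some g ∧ s₂.head? = some g ∧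
      tileCount C g = tileCount B₀ g ∧ C' = play s₁ s₂ rest) ∨
  (∃ (g : G) (s : List G) (rest : Board G),
      C = s ::ₘ rest ∧ s.head? = some g ∧
      tileCount C g + 2 ≤ tileCount B₀ g ∧
      C' = Multiset.filter (fun t => t ≠ []) (s.tail ::ₘ rest))

/-- Relaxed solvability of a position `C` in the relaxed game started at `B₀`. -/
def RSolvable (B₀ C : Board G) : Prop := Relation.ReflTransGen (RMove B₀) C 0

/-!
Once two tiles of a group `g` are gone, every further playable `g`-tile may be removed on its
own, and such a removal commutes with every other relaxed move: a pair move is on an untouched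
group, so it never takes that tile. Hence a relaxed solution survives removing such a tile early.
From the pair `S = {s₁, s₂}` one may thus also pop the tops of `T - S`, and from the pair
`T = {t₁, t₂}` one reaches, by single removals of the tops of `S - T`, the same position: the
one in which the tops of `S ∪ T` are gone.
-/

set_option linter.unusedSectionVars false

def dropEmpty (B : Board G) : Board G := B.filter (· ≠ [])

/-- The board `u + r` after removing the top tile of every stack of `u`. -/
def popTops (u r : Board G) : Board G := dropEmpty (u.map List.tail + r)

lemma ne_nil_of_head?_eq_some {α : Type*} {s : List α} {a : α} (h : s.head? = some a) :
    s ≠ [] := by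
  rintro rfl; simp at h

lemma dropEmpty_add_of_forall_ne_nil {u : Board G} (hu : ∀ s ∈ u, s ≠ []) (m : Board G) :
    dropEmpty (u + m) = u + dropEmpty m := by
  rw [dropEmpty, Multiset.filter_add, Multiset.filter_eq_self.mpr hu, dropEmpty]

lemma dropEmpty_add_dropEmpty (u m : Board G) :
    dropEmpty (u + dropEmpty m) = dropEmpty (u + m) := by
  simp only [dropEmpty, Multiset.filter_add, Multiset.filter_filter, and_self]

lemma tileCount_add (u m : Board G) (g : G) :
    tileCount (u + m) g = tileCount u g + tileCount m g := by
  simp [tileCount]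

lemma tileCount_cons (s : List G) (m : Board G) (g : G) :
    tileCount (s ::ₘ m) g = s.count g + tileCount m g := by
  simp [tileCount]

lemma tileCount_dropEmpty (m : Board G) (g : G) : tileCount (dropEmpty m) g = tileCount m g := by
  conv_rhs => rw [← Multiset.filter_add_not (· ≠ []) m]
  rw [tileCount_add, dropEmpty]
  suffices tileCount (m.filter (fun s => ¬s ≠ [])) g = 0 by omega
  simp +contextual [tileCount, Multiset.sum_eq_zero_iff]

lemma count_tail_add_ite (s : List G) (g : G) :
    s.tail.count g + (if s.head? = some g then 1 else 0) = s.count g := by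
  cases s with
  | nil => simp
  | cons a s => by_cases h : a = g <;> simp [h]

lemma tileCount_popTops_add_countP (u r : Board G) (g : G) :
    tileCount (popTops u r) g + u.countP (·.head? = some g) = tileCount (u + r) g := by
  induction u using Multiset.induction_on with
  | empty => simp [popTops, tileCount_dropEmpty]
  | cons s u ih =>
    have := count_tail_add_ite s g
    simp only [popTops, tileCount_dropEmpty, tileCount_add, Multiset.map_cons,
      Multiset.countP_cons, tileCount_cons, Multiset.cons_add] at ih ⊢
    split_ifs at this ⊢ <;> omega

lemma tileCount_popTops_le (u r : Board G) (g : G) :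
    tileCount (popTops u r) g ≤ tileCount (u + r) g :=
  Nat.le.intro (tileCount_popTops_add_countP u r g)

lemma tileCount_popTops_of_forall_head? {u : Board G} {g : G}
    (hu : ∀ s ∈ u, s.head? = some g) (r : Board G) :
    tileCount (popTops u r) g + Multiset.card u = tileCount (u + r) g := by
  rw [← Multiset.countP_eq_card.mpr hu, tileCount_popTops_add_countP]

lemma tileCount_popTops_of_forall_head?_ne {u : Board G} {g : G}
    (hu : ∀ s ∈ u, s.head? ≠ some g) (r : Board G) :
    tileCount (popTops u r) g = tileCount (u + r) g := by
  rw [← tileCount_popTops_add_countP u r g, Multiset.countP_eq_zero.mpr hu, add_zero]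

lemma popTops_popTops (u v r : Board G) : popTops u (popTops v r) = popTops (u + v) r := by
  rw [popTops, popTops, popTops, dropEmpty_add_dropEmpty, Multiset.map_add, add_assoc]

lemma popTops_add_of_forall_ne_nil {u : Board G} (hu : ∀ s ∈ u, s ≠ []) (v r : Board G) :
    popTops v (u + r) = u + popTops v r := by
  rw [popTops, add_left_comm, dropEmpty_add_of_forall_ne_nil hu, popTops]

lemma popTops_cons_of_ne_nil {a : List G} (ha : a ≠ []) (v r : Board G) :
    popTops v (a ::ₘ r) = a ::ₘ popTops v r := by
  simpa using popTops_add_of_forall_ne_nil (u := {a}) (by simpa using ha) v r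

lemma popTops_comm (u v r : Board G) : popTops u (popTops v r) = popTops v (popTops u r) := by
  rw [popTops_popTops, add_comm, ← popTops_popTops]

lemma popTops_singleton (s : List G) (r : Board G) :
    popTops {s} r = (s.tail ::ₘ r).filter (· ≠ []) := by
  rw [popTops, Multiset.map_singleton, Multiset.singleton_add, dropEmpty]

lemma play_eq_popTops (s₁ s₂ : List G) (r : Board G) : play s₁ s₂ r = popTops {s₁, s₂} r := by
  simp only [play, popTops, dropEmpty, Multiset.insert_eq_cons, Multiset.map_cons,
    Multiset.map_singleton, Multiset.cons_add, Multiset.singleton_add]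

lemma RMove.pair {B₀ : Board G} {g : G} {s₁ s₂ : List G} {r : Board G}
    (hs₁ : s₁.head? = some g) (hs₂ : s₂.head? = some g)
    (hfresh : tileCount (s₁ ::ₘ s₂ ::ₘ r) g = tileCount B₀ g) :
    RMove B₀ (s₁ ::ₘ s₂ ::ₘ r) (popTops {s₁, s₂} r) :=
  Or.inl ⟨g, s₁, s₂, r, rfl, hs₁, hs₂, hfresh, (play_eq_popTops s₁ s₂ r).symm⟩

lemma RMove.single {B₀ : Board G} {g : G} {s : List G} {r : Board G}
    (hs : s.head? = some g) (hopen : tileCount (s ::ₘ r) g + 2 ≤ tileCount B₀ g) :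
    RMove B₀ (s ::ₘ r) (popTops {s} r) :=
  Or.inr ⟨g, s, r, rfl, hs, hopen, (popTops_singleton s r).symm⟩

lemma RMove.tileCount_le {B₀ C C' : Board G} (hmove : RMove B₀ C C') (g : G) :
    tileCount C' g ≤ tileCount C g := by
  rcases hmove with ⟨_, s₁, s₂, r, rfl, -, -, -, rfl⟩ | ⟨_, s, r, rfl, -, -, rfl⟩
  · rw [play_eq_popTops]
    exact (tileCount_popTops_le _ r g).trans_eq (by simp [Multiset.insert_eq_cons])
  · rw [← popTops_singleton]
    exact (tileCount_popTops_le _ r g).trans_eq (by simp)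

lemma RMove.popTop_comm {B₀ rest E : Board G} {s : List G} {h : G}
    (hmove : RMove B₀ (s ::ₘ rest) E) (hs : s.head? = some h)
    (hopen : tileCount (s ::ₘ rest) h + 2 ≤ tileCount B₀ h) :
    E = popTops {s} rest ∨
      ∃ rest', E = s ::ₘ rest' ∧ RMove B₀ (popTops {s} rest) (popTops {s} rest') := by
  have hs_ne := ne_nil_of_head?_eq_some hs
  rcases hmove with ⟨g, s₁, s₂, r, hC, hs₁, hs₂, hfresh, rfl⟩ | ⟨g, s', r, hC, hs', hopen', rfl⟩
  · -- `g` is untouched while `h` is not, so the pair move leaves `s` alone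
    have hgh : g ≠ h := by rintro rfl; omega
    have hss₁ : s ≠ s₁ := by rintro rfl; exact hgh (Option.some_injective _ (hs₁.symm.trans hs))
    have hss₂ : s₂ ≠ s := by rintro rfl; exact hgh (Option.some_injective _ (hs₂.symm.trans hs))
    obtain ⟨-, cs, rfl, hcs⟩ := (Multiset.cons_eq_cons.mp hC).resolve_left (by tauto)
    obtain ⟨-, r', rfl, rfl⟩ := (Multiset.cons_eq_cons.mp hcs).resolve_left (by tauto)
    refine .inr ⟨popTops {s₁, s₂} r', ?_, ?_⟩
    · rw [play_eq_popTops, popTops_cons_of_ne_nil hs_ne]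
    · rw [popTops_cons_of_ne_nil (ne_nil_of_head?_eq_some hs₁),
        popTops_cons_of_ne_nil (ne_nil_of_head?_eq_some hs₂), popTops_comm]
      refine RMove.pair hs₁ hs₂ (hfresh ▸ ?_)
      have hsg : ∀ t ∈ ({s} : Board G), t.head? ≠ some g := by simp [hs, hgh.symm]
      simp only [tileCount_cons, tileCount_popTops_of_forall_head?_ne hsg, Multiset.singleton_add]
      omega
  · rcases Multiset.cons_eq_cons.mp hC with ⟨rfl, rfl⟩ | ⟨-, r', rfl, rfl⟩
    · exact .inl (popTops_singleton _ _).symm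
    · refine .inr ⟨popTops {s'} r', ?_, ?_⟩
      · rw [← popTops_singleton, popTops_cons_of_ne_nil hs_ne]
      · rw [popTops_cons_of_ne_nil (ne_nil_of_head?_eq_some hs'), popTops_comm]
        refine RMove.single hs' (le_trans ?_ hopen')
        have := tileCount_popTops_le {s} r' g
        simp only [tileCount_cons, Multiset.singleton_add] at this ⊢
        omega

lemma RSolvable.popTop {B₀ rest : Board G} {s : List G} {h : G}
    (hsolv : RSolvable B₀ (s ::ₘ rest)) (hs : s.head? = some h)
    (hopen : tileCount (s ::ₘ rest) h + 2 ≤ tileCount B₀ h) :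
    RSolvable B₀ (popTops {s} rest) := by
  generalize hD : s ::ₘ rest = D at hsolv
  induction hsolv using Relation.ReflTransGen.head_induction_on generalizing rest with
  | refl => exact absurd hD Multiset.cons_ne_zero
  | head hmove hsolvE ih =>
    subst hD
    rcases hmove.popTop_comm hs hopen with rfl | ⟨rest', rfl, hmove'⟩
    · exact hsolvE
    · exact .head hmove' (ih ((Nat.add_le_add_right (hmove.tileCount_le h) 2).trans hopen) rfl)

lemma tileCount_add_popTops_le (u v r : Board G) (h : G) (s : List G) :
    tileCount (u + popTops (s ::ₘ v) r) h ≤ tileCount (s ::ₘ (u + popTops v r)) h := by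
  have := tileCount_popTops_le {s} (popTops v r) h
  rw [popTops_popTops, Multiset.singleton_add] at this
  simp only [tileCount_add, tileCount_cons, Multiset.singleton_add] at this ⊢
  omega

lemma RSolvable.popTops_add {B₀ u v r : Board G} {h : G} (hsolv : RSolvable B₀ (u + popTops v r))
    (hu : ∀ s ∈ u, s.head? = some h)
    (hopen : tileCount (u + popTops v r) h + 2 ≤ tileCount B₀ h) :
    RSolvable B₀ (popTops (u + v) r) := by
  induction u using Multiset.induction_on generalizing v with
  | empty => simpa using hsolv
  | cons s u ih =>
    have hs := hu s (Multiset.mem_cons_self s u)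
    have hu' : ∀ t ∈ u, t.head? = some h := fun t ht => hu t (Multiset.mem_cons_of_mem ht)
    rw [Multiset.cons_add] at hsolv hopen ⊢
    have hpop := hsolv.popTop hs hopen
    rw [popTops_add_of_forall_ne_nil (fun t ht => ne_nil_of_head?_eq_some (hu' t ht)),
      popTops_popTops, Multiset.singleton_add] at hpop
    have hopen' := (Nat.add_le_add_right (tileCount_add_popTops_le u v r h s) 2).trans hopen
    simpa [Multiset.add_cons] using ih hpop hu' hopen'

lemma reflTransGen_popTops {B₀ u v r : Board G} {h : G} (hu : ∀ s ∈ u, s.head? = some h)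
    (hopen : tileCount (u + popTops v r) h + 2 ≤ tileCount B₀ h) :
    Relation.ReflTransGen (RMove B₀) (u + popTops v r) (popTops (u + v) r) := by
  induction u using Multiset.induction_on generalizing v with
  | empty => simpa using .refl
  | cons s u ih =>
    have hs := hu s (Multiset.mem_cons_self s u)
    have hu' : ∀ t ∈ u, t.head? = some h := fun t ht => hu t (Multiset.mem_cons_of_mem ht)
    rw [Multiset.cons_add] at hopen ⊢
    have hmove := RMove.single hs hopen
    rw [popTops_add_of_forall_ne_nil (fun t ht => ne_nil_of_head?_eq_some (hu' t ht)),
      popTops_popTops, Multiset.singleton_add] at hmove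
    have hopen' := (Nat.add_le_add_right (tileCount_add_popTops_le u v r h s) 2).trans hopen
    exact .head hmove (by simpa [Multiset.add_cons] using ih hu' hopen')

lemma eq_tsub_add_tsub_union {α : Type*} [DecidableEq α] {C S T r : Multiset α}
    (hS : C = S + r) (hT : T ≤ C) : r = (T - S) + (C - (S ∪ T)) := by
  ext a
  have := Multiset.count_le_of_le a hT
  simp only [hS, Multiset.count_add, Multiset.count_sub, Multiset.count_union] at this ⊢
  omega

lemma RSolvable.popTops_exchange {B₀ S T R : Board G} {g : G}
    (hsolv : RSolvable B₀ (popTops S ((T - S) + R)))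
    (hS : ∀ s ∈ S, s.head? = some g) (hT : ∀ t ∈ T, t.head? = some g)
    (hopenS : tileCount (popTops S ((T - S) + R)) g + 2 ≤ tileCount B₀ g)
    (hopenT : tileCount (popTops T ((S - T) + R)) g + 2 ≤ tileCount B₀ g) :
    RSolvable B₀ (popTops T ((S - T) + R)) := by
  have hTS : ∀ t ∈ T - S, t.head? = some g := fun t ht => hT t (Multiset.mem_of_le tsub_le_self ht)
  have hST : ∀ s ∈ S - T, s.head? = some g := fun s hs => hS s (Multiset.mem_of_le tsub_le_self hs)
  rw [popTops_add_of_forall_ne_nil (fun t ht => ne_nil_of_head?_eq_some (hTS t ht))] at hsolv hopenS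
  rw [popTops_add_of_forall_ne_nil (fun s hs => ne_nil_of_head?_eq_some (hST s hs))] at hopenT ⊢
  -- both positions lead to `popTops (S ∪ T) R`, as `T - S + S = T ∪ S` by definition
  have hsolvU : RSolvable B₀ (popTops (T - S + S) R) := hsolv.popTops_add hTS hopenS
  rw [show T - S + S = S - T + T from Multiset.union_comm T S] at hsolvU
  exact (reflTransGen_popTops hST hopenT).trans hsolvU

theorem stmt15_general (B₀ C : Board G) (g : G)
    (hfresh : tileCount C g = tileCount B₀ g)
    (s₁ s₂ t₁ t₂ : List G) (r₁ r₂ : Board G)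
    (h1 : C = s₁ ::ₘ s₂ ::ₘ r₁) (hs₁ : s₁.head? = some g) (hs₂ : s₂.head? = some g)
    (h2 : C = t₁ ::ₘ t₂ ::ₘ r₂) (ht₁ : t₁.head? = some g) (ht₂ : t₂.head? = some g)
    (hsolv : RSolvable B₀ (play s₁ s₂ r₁)) :
    RSolvable B₀ (play t₁ t₂ r₂) := by
  set S : Board G := {s₁, s₂}
  set T : Board G := {t₁, t₂}
  have hCS : C = S + r₁ := by simp [S, h1]
  have hCT : C = T + r₂ := by simp [T, h2]
  have hopen {U r : Board G} (hC : C = U + r) (hU : ∀ s ∈ U, s.head? = some g)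
      (hcard : Multiset.card U = 2) : tileCount (popTops U r) g + 2 ≤ tileCount B₀ g := by
    rw [← hfresh, ← hcard, tileCount_popTops_of_forall_head? hU, hC]
  have hStop : ∀ s ∈ S, s.head? = some g := by simp [S, hs₁, hs₂]
  have hTtop : ∀ t ∈ T, t.head? = some g := by simp [T, ht₁, ht₂]
  have hopenS := hopen hCS hStop (by simp [S])
  have hopenT := hopen hCT hTtop (by simp [T])
  obtain ⟨R, rfl, rfl⟩ : ∃ R, r₁ = (T - S) + R ∧ r₂ = (S - T) + R :=
    ⟨C - (S ∪ T), eq_tsub_add_tsub_union hCS (hCT ▸ le_self_add),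
      Multiset.union_comm S T ▸ eq_tsub_add_tsub_union hCT (hCS ▸ le_self_add)⟩
  rw [play_eq_popTops] at hsolv ⊢
  exact hsolv.popTops_exchange hStop hTtop hopenS hopenT

/-- in the relaxed game it is impossible to play the wrong first
match of a group: at any reachable position where group `g` is still untouched,
if playing one playable pair of `g` leads to a relaxed solution, then so does
playing any other playable pair of `g`. -/
theorem stmt15 (B₀ C : Board G) (g : G)
    (hreach : Relation.ReflTransGen (RMove B₀) B₀ C)
    (hfresh : tileCount C g = tileCount B₀ g)
    (s₁ s₂ t₁ t₂ : List G) (r₁ r₂ : Board G)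
    (h1 : C = s₁ ::ₘ s₂ ::ₘ r₁) (hs₁ : s₁.head? = some g) (hs₂ : s₂.head? = some g)
    (h2 : C = t₁ ::ₘ t₂ ::ₘ r₂) (ht₁ : t₁.head? = some g) (ht₂ : t₂.head? = some g)
    (hsolv : RSolvable B₀ (play s₁ s₂ r₁)) :
    RSolvable B₀ (play t₁ t₂ r₂) :=
  stmt15_general B₀ C g hfresh s₁ s₂ t₁ t₂ r₁ r₂ h1 hs₁ hs₂ h2 ht₁ ht₂ hsolv
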